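/- arXiv:1501.02501 — 4 statements merged into one kernel-verified Lean document; each statement's English description precedes it below -/
import Mathlib

section
/- Let H be a real Hilbert space and f, g : H → ℝ ∪ {+∞} proper, lower semicontinuous, convex functions with dom g ⊆ dom f and f Fréchet differentiable on an open set containing dom g. Then for every x ∈ dom g and every 0 < α₁ ≤ α₂ one has (α₂/α₁)·‖x − J(x,α₁)‖ ≥ ‖x − J(x,α₂)‖ ≥ ‖x − J(x,α₁)‖, where J(x,α) := prox_{αg}(x − α∇f(x)). -/
open Set Filter Topology Bornology RealInnerProductSpace

noncomputable section

variable {H : Type*} [NormedAddCommGroup H] [InnerProductSpace ℝ H] [CompleteSpace H]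

/-- The effective domain of an extended-real-valued function. -/
def edom (h : H → EReal) : Set H := {x | h x < ⊤}

/-- `h` is a proper, lower semicontinuous, convex extended-real-valued function. -/
def ProperLscConvex (h : H → EReal) : Prop :=
  (∃ x, h x < ⊤) ∧ (∀ x, ⊥ < h x) ∧ LowerSemicontinuous h ∧
    ∀ x y : H, ∀ a b : ℝ, 0 ≤ a → 0 ≤ b → a + b = 1 →
      h (a • x + b • y) ≤ (a : EReal) * h x + (b : EReal) * h y

/-- `p` is the proximal point `prox_{αg}(z)`, i.e. a minimizer of
`y ↦ g(y) + (1/(2α))‖y - z‖²` (such a minimizer is automatically unique). -/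
def IsProxPt (g : H → EReal) (α : ℝ) (z p : H) : Prop :=
  ∀ y : H, g p + (((1 / (2 * α)) * ‖p - z‖ ^ 2 : ℝ) : EReal)
    ≤ g y + (((1 / (2 * α)) * ‖y - z‖ ^ 2 : ℝ) : EReal)

/-- `f` is Fréchet differentiable, with gradient `f'`, on an open set containing `s`
(in particular `f` is finite there). -/
def GradOnOpenSupset (f : H → EReal) (f' : H → H) (s : Set H) : Prop :=
  ∃ U : Set H, IsOpen U ∧ s ⊆ U ∧
    ∀ x ∈ U, f x ≠ ⊤ ∧ HasGradientAt (fun y => (f y).toReal) (f' x) x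

/-- Second half of Assumption A2: `f'` is uniformly continuous on bounded subsets of
`dom g` and maps bounded subsets of `dom g` to bounded sets. -/
def UCBddOnBounded (g : H → EReal) (f' : H → H) : Prop :=
  ∀ A : Set H, A ⊆ edom g → IsBounded A →
    UniformContinuousOn f' A ∧ IsBounded (f' '' A)

/-- The Linesearch-1 acceptance inequality at the point `x` with stepsize `α`. -/
def LS1 (f' : H → H) (J : H → ℝ → H) (δ : ℝ) (x : H) (α : ℝ) : Prop :=
  α * ‖f' (J x α) - f' x‖ ≤ δ * ‖J x α - x‖

/-- `α` is the output of Linesearch 1 at `x`: the largest element of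
`{σ, σθ, σθ², …}` satisfying the acceptance inequality. -/
def LS1Step (f' : H → H) (J : H → ℝ → H) (δ σ θ : ℝ) (x : H) (α : ℝ) : Prop :=
  ∃ n : ℕ, α = σ * θ ^ n ∧ LS1 f' J δ x α ∧
    ∀ m : ℕ, m < n → ¬ LS1 f' J δ x (σ * θ ^ m)

/-- The set of minimizers `S⁎` of `f + g` over `H`. -/
def argminSet (f g : H → EReal) : Set H := {x | ∀ y, f x + g x ≤ f y + g y}

/-- The Linesearch-2 acceptance inequality at `x` (with `Jx = prox_g(x - ∇f(x))`)
with stepsize `β`. -/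
def LS2Ineq (f g : H → EReal) (f' : H → H) (x Jx : H) (β : ℝ) : Prop :=
  f (x - β • (x - Jx)) + g (x - β • (x - Jx)) ≤
    f x + g x - (β : EReal) * (g x - g Jx)
      - ((β * ⟪f' x, x - Jx⟫ : ℝ) : EReal) + (((β / 2) * ‖x - Jx‖ ^ 2 : ℝ) : EReal)

/-- `v` belongs to the convex subdifferential `∂h(y)`. -/
def InSubdiff (h : H → EReal) (y v : H) : Prop :=
  ∀ z : H, ((⟪v, z - y⟫ : ℝ) : EReal) ≤ h z - h y

/-- `h` is strongly convex with modulus `μ`. -/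
def StrongConvexWith (h : H → EReal) (μ : ℝ) : Prop :=
  ∀ x y v : H, InSubdiff h y v →
    h y + ((⟪v, x - y⟫ : ℝ) : EReal) + (((μ / 2) * ‖x - y‖ ^ 2 : ℝ) : EReal) ≤ h x

lemma prox_ne_top' {g : H → EReal} {α : ℝ} {z p y : H}
    (hp : IsProxPt g α z p) (hy : g y ≠ ⊤) : g p ≠ ⊤ := by
  intro htop
  have h := hp y
  rw [htop, EReal.top_add_of_ne_bot (EReal.coe_ne_bot _)] at h
  have : g y + (((1 / (2 * α)) * ‖y - z‖ ^ 2 : ℝ) : EReal) < ⊤ :=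
    EReal.add_lt_top hy (EReal.coe_ne_top _)
  exact absurd (top_le_iff.1 h) this.ne

lemma prox_subgrad' {g : H → EReal} (hbot : ∀ x, ⊥ < g x)
    (hconv : ∀ x y : H, ∀ a b : ℝ, 0 ≤ a → 0 ≤ b → a + b = 1 →
      g (a • x + b • y) ≤ (a : EReal) * g x + (b : EReal) * g y)
    {α : ℝ} (hα : 0 < α) {z p y : H} (hp : IsProxPt g α z p) (hy : g y ≠ ⊤) :
    ⟪z - p, y - p⟫ ≤ α * ((g y).toReal - (g p).toReal) := by
  have hptop : g p ≠ ⊤ := prox_ne_top' hp hy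
  set rp := (g p).toReal with hrp
  set ry := (g y).toReal with hry
  have hgp : g p = (rp : EReal) := (EReal.coe_toReal hptop (hbot p).ne').symm
  have hgy : g y = (ry : EReal) := (EReal.coe_toReal hy (hbot y).ne').symm
  set n := ‖y - p‖ ^ 2 with hn
  set ip := ⟪p - z, y - p⟫ with hip
  have key : ∀ t : ℝ, 0 < t → t ≤ 1 →
      α * (rp - ry) ≤ ip + t * (n / 2) := by
    intro t ht ht1
    set q := p + t • (y - p) with hq
    have heq : (1 - t) • p + t • y = q := by
      simp only [hq, smul_sub, sub_smul, one_smul]; abel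
    have hcv : g q ≤ (((1 - t) * rp + t * ry : ℝ) : EReal) := by
      have h2 := hconv p y (1 - t) t (by linarith) ht.le (by ring)
      rw [heq, hgp, hgy] at h2
      refine h2.trans_eq ?_
      norm_cast
    have hpq := hp q
    rw [hgp] at hpq
    have h3 : ((rp + (1 / (2 * α)) * ‖p - z‖ ^ 2 : ℝ) : EReal)
        ≤ (((1 - t) * rp + t * ry + (1 / (2 * α)) * ‖q - z‖ ^ 2 : ℝ) : EReal) := by
      rw [EReal.coe_add, EReal.coe_add]
      exact hpq.trans (add_le_add_left hcv _)
    have hre : rp + (1 / (2 * α)) * ‖p - z‖ ^ 2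
        ≤ (1 - t) * rp + t * ry + (1 / (2 * α)) * ‖q - z‖ ^ 2 := by exact_mod_cast h3
    have hqn : ‖q - z‖ ^ 2 = ‖p - z‖ ^ 2 + 2 * t * ip + t ^ 2 * n := by
      have h4 : q - z = (p - z) + t • (y - p) := by simp only [hq]; abel
      rw [h4, norm_add_sq_real, real_inner_smul_right, norm_smul,
        Real.norm_eq_abs, mul_pow, sq_abs, hn, hip]
      ring
    rw [hqn] at hre
    have hnn : 0 ≤ n := by positivity
    have h5 : t * (rp - ry) ≤ (1 / (2 * α)) * (2 * t * ip + t ^ 2 * n) := by nlinarith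
    have h6 : rp - ry ≤ 1 / α * ip + t * n / (2 * α) := by
      rw [← mul_le_mul_iff_right₀ ht]
      calc t * (rp - ry) ≤ 1 / (2 * α) * (2 * t * ip + t ^ 2 * n) := h5
        _ = t * (1 / α * ip + t * n / (2 * α)) := by field_simp
    have h7 := mul_le_mul_of_nonneg_left h6 hα.le
    have h8 : α * (1 / α * ip + t * n / (2 * α)) = ip + t * (n / 2) := by
      field_simp
    linarith
  have hznp : ⟪z - p, y - p⟫ = -ip := by
    rw [hip, show z - p = -(p - z) by abel, inner_neg_left]
  rw [hznp]
  have hnn : 0 ≤ n / 2 := by positivity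
  by_contra hc
  push_neg at hc
  set ε := (-ip - α * (ry - rp)) / 2 with hε
  have hεpos : 0 < ε := by simp only [hε]; linarith
  set t := min 1 (ε / (n / 2 + 1)) with ht
  have htpos : 0 < t := lt_min one_pos (by positivity)
  have ht1 : t ≤ 1 := min_le_left _ _
  have h7 := key t htpos ht1
  have h8 : t * (n / 2) ≤ ε := by
    have h9 : t ≤ ε / (n / 2 + 1) := min_le_right _ _
    have := mul_le_mul_of_nonneg_right h9 hnn
    have h10 : ε / (n / 2 + 1) * (n / 2) ≤ ε := by
      rw [div_mul_eq_mul_div, div_le_iff₀ (by positivity)]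
      nlinarith
    linarith
  simp only [hε] at h8 h7
  linarith

set_option maxHeartbeats 1000000 in
/-- Lemma 2.1: for `x ∈ dom g` and `0 < α₁ ≤ α₂`,
`(α₂/α₁)‖x − J(x,α₁)‖ ≥ ‖x − J(x,α₂)‖ ≥ ‖x − J(x,α₁)‖`. -/
theorem stmt1
    (f g : H → EReal) (f' : H → H) (prox : ℝ → H → H)
    (hf : ProperLscConvex f) (hg : ProperLscConvex g)
    (hdom : edom g ⊆ edom f)
    (hdiff : GradOnOpenSupset f f' (edom g))
    (hprox : ∀ α : ℝ, 0 < α → ∀ z : H, IsProxPt g α z (prox α z))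
    (J : H → ℝ → H) (hJ : ∀ (x : H) (α : ℝ), J x α = prox α (x - α • f' x))
    (x : H) (hx : x ∈ edom g)
    (α₁ α₂ : ℝ) (h1 : 0 < α₁) (h12 : α₁ ≤ α₂) :
    (α₂ / α₁) * ‖x - J x α₁‖ ≥ ‖x - J x α₂‖ ∧ ‖x - J x α₂‖ ≥ ‖x - J x α₁‖ := by
  obtain ⟨-, hbot, -, hconv⟩ := hg
  have hgx : g x ≠ ⊤ := (hx : g x < ⊤).ne
  have h2 : 0 < α₂ := h1.trans_le h12
  have hp₁ : IsProxPt g α₁ (x - α₁ • f' x) (J x α₁) := by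
    rw [hJ]; exact hprox α₁ h1 _
  have hp₂ : IsProxPt g α₂ (x - α₂ • f' x) (J x α₂) := by
    rw [hJ]; exact hprox α₂ h2 _
  set u := f' x with hu
  set p₁ := J x α₁ with hP1
  set p₂ := J x α₂ with hP2
  have hT1 : g p₁ ≠ ⊤ := prox_ne_top' hp₁ hgx
  have hT2 : g p₂ ≠ ⊤ := prox_ne_top' hp₂ hgx
  have A := prox_subgrad' hbot hconv h1 hp₁ hT2
  have B := prox_subgrad' hbot hconv h2 hp₂ hT1
  set a := x - p₁ with ha
  set b := x - p₂ with hb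
  have e1 : x - α₁ • u - p₁ = a - α₁ • u := by rw [ha]; abel
  have e1' : x - α₂ • u - p₂ = b - α₂ • u := by rw [hb]; abel
  have e2 : p₂ - p₁ = a - b := by rw [ha, hb]; abel
  have e2' : p₁ - p₂ = -(a - b) := by rw [ha, hb]; abel
  rw [e1, e2, inner_sub_left, real_inner_smul_left, inner_sub_right,
    real_inner_self_eq_norm_sq] at A
  rw [e1', e2', inner_neg_right, inner_sub_left, real_inner_smul_left,
    inner_sub_right, real_inner_self_eq_norm_sq, real_inner_comm a b] at B
  set r₁ := (g p₁).toReal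
  set r₂ := (g p₂).toReal
  set ipab := ⟪a, b⟫ with hipab
  set iu := ⟪u, a - b⟫ with hiu
  have CS : ipab ≤ ‖a‖ * ‖b‖ := real_inner_le_norm a b
  set s := ‖a‖ with hs
  set tn := ‖b‖ with htn
  have hs0 : 0 ≤ s := norm_nonneg _
  have htn0 : 0 ≤ tn := norm_nonneg _
  have kA := mul_le_mul_of_nonneg_left A h2.le
  have kB := mul_le_mul_of_nonneg_left B h1.le
  have key : α₂ * s ^ 2 + α₁ * tn ^ 2 ≤ (α₁ + α₂) * (s * tn) := by
    nlinarith [mul_le_mul_of_nonneg_left CS (by linarith : (0:ℝ) ≤ α₁ + α₂)]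
  have hstn : s ≤ tn := by
    by_contra hc
    push_neg at hc
    have h9 : 0 < s - tn := sub_pos.2 hc
    nlinarith [mul_pos h2 (mul_pos h9 h9),
      mul_nonneg (mul_nonneg (sub_nonneg.2 h12) htn0) h9.le]
  refine ⟨?_, hstn⟩
  rw [ge_iff_le, div_mul_eq_mul_div, le_div_iff₀ h1]
  by_contra hc
  push_neg at hc
  have hst : s < tn := by nlinarith
  nlinarith [mul_pos (sub_pos.2 hst) (show 0 < α₁ * tn - α₂ * s by nlinarith)]
end
end

section
/- Let H be a real Hilbert space and let f, g : H → ℝ ∪ {+∞} be proper, lower semicontinuous, convex functions with dom g ⊆ dom f and f Fréchet differentiable on an open set containing dom g. Fix θ ∈ (0,1) and x ∈ dom g, and set J_x := prox_g(x − ∇f(x)). Then there exists a nonnegative integer n such that, with β = θⁿ, one has (f+g)(x − β(x − J_x)) ≤ (f+g)(x) − β[g(x) − g(J_x)] − β⟨∇f(x), x − J_x⟩ + (β/2)‖x − J_x‖²; i.e., the backtracking linesearch that starts at β = 1 and multiplies β by θ while this inequality fails terminates after finitely many steps. -/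
open Set Filter Topology Bornology RealInnerProductSpace

noncomputable section

variable {H : Type*} [NormedAddCommGroup H] [InnerProductSpace ℝ H] [CompleteSpace H]

/-- Lemma 3.2: Linesearch 2 terminates after finitely many steps:
some `β = θⁿ` satisfies the acceptance inequality. -/
theorem stmt3
    (f g : H → EReal) (f' : H → H)
    (hf : ProperLscConvex f) (hg : ProperLscConvex g)
    (hdom : edom g ⊆ edom f)
    (hdiff : GradOnOpenSupset f f' (edom g))
    (θ : ℝ) (hθ : θ ∈ Set.Ioo (0 : ℝ) 1)
    (x : H) (hx : x ∈ edom g)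
    (Jx : H) (hJx : IsProxPt g 1 (x - f' x) Jx) :
    ∃ n : ℕ, LS2Ineq f g f' x Jx (θ ^ n) := by
  obtain ⟨θpos, θlt1⟩ := hθ
  have hgx_top : g x < ⊤ := hx
  have hgx_bot : ⊥ < g x := hg.2.1 x
  have hfx_top : f x < ⊤ := hdom hx
  have hfx_bot : ⊥ < f x := hf.2.1 x
  have hgJ_bot : ⊥ < g Jx := hg.2.1 Jx
  have hgJ_top : g Jx < ⊤ := by
    by_contra hc
    push_neg at hc
    have h1 := hJx x
    rw [top_le_iff.1 hc, EReal.top_add_coe] at h1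
    have h2 : g x + (((1 / (2 * 1)) * ‖x - (x - f' x)‖ ^ 2 : ℝ) : EReal) < ⊤ :=
      EReal.add_lt_top hgx_top.ne (EReal.coe_ne_top _)
    exact absurd (top_le_iff.1 h1) h2.ne
  set fx := (f x).toReal with hfxdef
  set gx := (g x).toReal with hgxdef
  set gJ := (g Jx).toReal with hgJdef
  have hfx : f x = (fx : EReal) := (EReal.coe_toReal hfx_top.ne hfx_bot.ne').symm
  have hgx : g x = (gx : EReal) := (EReal.coe_toReal hgx_top.ne hgx_bot.ne').symm
  have hgJ : g Jx = (gJ : EReal) := (EReal.coe_toReal hgJ_top.ne hgJ_bot.ne').symm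
  by_cases hxJ : Jx = x
  · refine ⟨0, ?_⟩
    unfold LS2Ineq
    subst hxJ
    simp [hfx, hgx, ← EReal.coe_sub, ← EReal.coe_mul, ← EReal.coe_add]
  -- main case
  set d := Jx - x with hddef
  have hd : d ≠ 0 := fun h => hxJ (by rwa [hddef, sub_eq_zero] at h)
  have hdn : 0 < ‖d‖ := norm_pos_iff.2 hd
  set ε : ℝ := ‖d‖ ^ 2 / 2 with hεdef
  have hε : 0 < ε := by positivity
  obtain ⟨U, hUopen, hsubU, hUprop⟩ := hdiff
  have hgrad : HasGradientAt (fun y => (f y).toReal) (f' x) x := (hUprop x (hsubU hx)).2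
  set φ : ℝ → ℝ := fun β => (f (x + β • d)).toReal with hφdef
  set c : ℝ := ⟪f' x, d⟫ with hcdef
  have hderiv : HasDerivAt φ c 0 := by
    have h1 : HasDerivAt (fun β : ℝ => x + β • d) d 0 := by
      simpa using ((hasDerivAt_id (0 : ℝ)).smul_const d).const_add x
    have h2 : HasFDerivAt (fun y => (f y).toReal)
        ((InnerProductSpace.toDual ℝ H) (f' x)) (x + (0 : ℝ) • d) := by
      simpa using hgrad.hasFDerivAt
    have := h2.comp_hasDerivAt 0 h1
    simp only [InnerProductSpace.toDual_apply_apply] at this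
    exact this
  have hsl := hasDerivAt_iff_tendsto_slope.1 hderiv
  have hev : ∀ᶠ β in 𝓝[≠] (0 : ℝ), slope φ 0 β ∈ Metric.ball c ε :=
    hsl (Metric.ball_mem_nhds c hε)
  have hpow : Tendsto (fun n : ℕ => θ ^ n) atTop (𝓝[≠] (0 : ℝ)) := by
    refine tendsto_nhdsWithin_of_tendsto_nhds_of_eventually_within _
      (tendsto_pow_atTop_nhds_zero_of_lt_one θpos.le θlt1) ?_
    exact Eventually.of_forall fun n => (pow_pos θpos n).ne'
  obtain ⟨n, hn⟩ := (hpow.eventually hev).exists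
  refine ⟨n, ?_⟩
  set β : ℝ := θ ^ n with hβdef
  have hβ0 : 0 < β := pow_pos θpos n
  have hβ1 : β ≤ 1 := pow_le_one₀ θpos.le θlt1.le
  -- slope bound
  have hslope : (φ β - φ 0) / β < c + ε := by
    have h := hn
    rw [Metric.mem_ball, Real.dist_eq, abs_sub_lt_iff] at h
    have h1 := h.1
    rw [slope_def_field, sub_zero] at h1
    linarith
  have hφβ : φ β ≤ fx + β * c + β * ε := by
    have hφ0 : φ 0 = fx := by simp [hφdef, hfxdef]
    have := (div_lt_iff₀ hβ0).1 hslope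
    nlinarith
  -- convexity of g
  have hz : (1 - β) • x + β • Jx = x + β • d := by rw [hddef]; module
  have hconv : g (x + β • d) ≤ ((1 - β : ℝ) : EReal) * g x + (β : EReal) * g Jx := by
    rw [← hz]
    exact hg.2.2.2 x Jx (1 - β) β (by linarith) hβ0.le (by ring)
  have hgz : g (x + β • d) ≤ (((1 - β) * gx + β * gJ : ℝ) : EReal) := by
    rw [hgx, hgJ] at hconv
    exact hconv.trans_eq (by norm_cast)
  -- f finite at the point
  have hmemg : x + β • d ∈ edom g := lt_of_le_of_lt hgz (EReal.coe_lt_top _)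
  have hfz_top : f (x + β • d) < ⊤ := hdom hmemg
  have hfz_bot : ⊥ < f (x + β • d) := hf.2.1 _
  have hfz : f (x + β • d) = ((φ β : ℝ) : EReal) := by
    rw [hφdef]
    exact (EReal.coe_toReal hfz_top.ne hfz_bot.ne').symm
  -- now prove the inequality
  unfold LS2Ineq
  have hpt : x - β • (x - Jx) = x + β • d := by rw [hddef]; module
  rw [hpt, hfz, hfx, hgx, hgJ]
  have hinner : ⟪f' x, x - Jx⟫ = -c := by
    rw [hcdef, hddef, ← inner_neg_right, neg_sub]
  have hnorm : ‖x - Jx‖ = ‖d‖ := by rw [hddef, norm_sub_rev]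
  calc ((φ β : ℝ) : EReal) + g (x + β • d)
      ≤ ((φ β : ℝ) : EReal) + (((1 - β) * gx + β * gJ : ℝ) : EReal) := by
        exact add_le_add_right hgz _
    _ = ((φ β + ((1 - β) * gx + β * gJ) : ℝ) : EReal) := by norm_cast
    _ ≤ ((fx + gx - β * (gx - gJ) - β * ⟪f' x, x - Jx⟫ + (β / 2) * ‖x - Jx‖ ^ 2 : ℝ) : EReal) := by
        rw [EReal.coe_le_coe_iff, hinner, hnorm]
        nlinarith [hφβ]
    _ = (fx : EReal) + (gx : EReal) - (β : EReal) * ((gx : EReal) - (gJ : EReal))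
          - ((β * ⟪f' x, x - Jx⟫ : ℝ) : EReal) + (((β / 2) * ‖x - Jx‖ ^ 2 : ℝ) : EReal) := by
        norm_cast
end
end

section
/- Let H be a real Hilbert space, f, g : H → ℝ ∪ {+∞} proper, lower semicontinuous, convex with dom g ⊆ dom f and f Fréchet differentiable on an open set containing dom g. Let δ ∈ (0, 1/2), let x^k ∈ dom g, α_k > 0, and x^{k+1} = prox_{α_k g}(x^k − α_k ∇f(x^k)), and suppose α_k·‖∇f(x^{k+1}) − ∇f(x^k)‖ ≤ δ·‖x^{k+1} − x^k‖. Then (f+g)(x^{k+1}) − (f+g)(x^k) ≤ −((1 − δ)/α_k)·‖x^{k+1} − x^k‖²; in particular the cost values are decreasing along such an iteration. -/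
open Set Filter Topology Bornology RealInnerProductSpace

noncomputable section

variable {H : Type*} [NormedAddCommGroup H] [InnerProductSpace ℝ H] [CompleteSpace H]

section Aux

variable {H : Type*} [NormedAddCommGroup H] [InnerProductSpace ℝ H] [CompleteSpace H]

omit [CompleteSpace H] in
/-- From EReal-convexity and finiteness at the endpoints, the value on the segment is
finite and satisfies the real convexity inequality. -/
lemma combo_bound {h : H → EReal}
    (hconv : ∀ x y : H, ∀ a b : ℝ, 0 ≤ a → 0 ≤ b → a + b = 1 →
      h (a • x + b • y) ≤ (a : EReal) * h x + (b : EReal) * h y)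
    (hbot : ∀ x, ⊥ < h x) {p x : H} (hp : h p ≠ ⊤) (hx : h x ≠ ⊤)
    {t : ℝ} (ht0 : 0 ≤ t) (ht1 : t ≤ 1) :
    h ((1 - t) • p + t • x) ≠ ⊤ ∧
      (h ((1 - t) • p + t • x)).toReal ≤ (1 - t) * (h p).toReal + t * (h x).toReal := by
  have key := hconv p x (1 - t) t (by linarith) ht0 (by ring)
  have hpc : h p = (((h p).toReal : ℝ) : EReal) := (EReal.coe_toReal hp (hbot p).ne').symm
  have hxc : h x = (((h x).toReal : ℝ) : EReal) := (EReal.coe_toReal hx (hbot x).ne').symm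
  rw [hpc, hxc] at key
  have key2 : h ((1 - t) • p + t • x)
      ≤ (((1 - t) * (h p).toReal + t * (h x).toReal : ℝ) : EReal) := by
    refine key.trans_eq ?_
    push_cast
    rfl
  refine ⟨(key2.trans_lt (EReal.coe_lt_top _)).ne, ?_⟩
  have := EReal.toReal_le_toReal key2 (hbot _).ne' (EReal.coe_ne_top _)
  simpa only [EReal.toReal_coe] using this

/-- Gradient inequality for a convex EReal function differentiable at `p`. -/
lemma grad_ineq {f : H → EReal}
    (hbot : ∀ x, ⊥ < f x)
    (hconv : ∀ x y : H, ∀ a b : ℝ, 0 ≤ a → 0 ≤ b → a + b = 1 →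
      f (a • x + b • y) ≤ (a : EReal) * f x + (b : EReal) * f y)
    {p x fp' : H} (hp : f p ≠ ⊤) (hx : f x ≠ ⊤)
    (hG : HasGradientAt (fun y => (f y).toReal) fp' p) :
    (f p).toReal + ⟪fp', x - p⟫ ≤ (f x).toReal := by
  set v := x - p with hv
  set φ : ℝ → ℝ := fun t => (f (p + t • v)).toReal with hφ
  have hseg : ∀ t : ℝ, p + t • v = (1 - t) • p + t • x := by
    intro t
    simp only [hv, smul_sub, sub_smul, one_smul]
    abel
  have hφ0 : φ 0 = (f p).toReal := by simp [hφ]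
  have hpv : p + v = x := by rw [hv]; abel
  have hφ1 : φ 1 = (f x).toReal := by simp [hφ, hpv]
  have hD : HasDerivAt φ ⟪fp', v⟫ 0 := by
    have hc : HasDerivAt (fun t : ℝ => p + t • v) v 0 := by
      simpa using ((hasDerivAt_id (0 : ℝ)).smul_const v).const_add p
    have h' : HasFDerivAt (fun y => (f y).toReal)
        ((InnerProductSpace.toDual ℝ H) fp') (p + (0 : ℝ) • v) := by
      simpa using hG.hasFDerivAt
    have := h'.comp_hasDerivAt 0 hc
    rw [InnerProductSpace.toDual_apply_apply] at this
    exact this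
  have hslope : ∀ t ∈ Set.Ioc (0 : ℝ) 1, slope φ 0 t ≤ φ 1 - φ 0 := by
    intro t ht
    have hb := (combo_bound hconv hbot hp hx ht.1.le ht.2).2
    rw [← hseg t] at hb
    have hφt : φ t ≤ φ 0 + t * (φ 1 - φ 0) := by
      rw [hφ0, hφ1]; calc φ t ≤ (1 - t) * (f p).toReal + t * (f x).toReal := hb
        _ = (f p).toReal + t * ((f x).toReal - (f p).toReal) := by ring
    rw [slope_def_field, sub_zero, div_le_iff₀ ht.1]
    linarith
  have hT : Filter.Tendsto (slope φ 0) (nhdsWithin 0 (Set.Ioi 0)) (nhds ⟪fp', v⟫) :=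
    (hasDerivAt_iff_tendsto_slope.mp hD).mono_left
      (nhdsWithin_mono 0 (fun t (ht : t ∈ Set.Ioi (0:ℝ)) => ne_of_gt ht))
  have hle : ⟪fp', v⟫ ≤ φ 1 - φ 0 :=
    le_of_tendsto hT (Filter.eventually_of_mem
      (Ioc_mem_nhdsGT_of_mem ⟨le_rfl, zero_lt_one⟩) hslope)
  rw [hφ0, hφ1] at hle
  linarith

end Aux

/-- Proposition 4.1(ii): under the linesearch inequality,
`(f+g)(x⁺) − (f+g)(x⁰) ≤ −((1 − δ)/α)‖x⁺ − x⁰‖²`, so the cost decreases. -/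
theorem stmt5
    (f g : H → EReal) (f' : H → H)
    (hf : ProperLscConvex f) (hg : ProperLscConvex g)
    (hdom : edom g ⊆ edom f)
    (hdiff : GradOnOpenSupset f f' (edom g))
    (δ : ℝ) (hδ : δ ∈ Set.Ioo (0 : ℝ) (1 / 2))
    (xk : H) (hxk : xk ∈ edom g) (αk : ℝ) (hαk : 0 < αk)
    (xk1 : H) (hxk1 : IsProxPt g αk (xk - αk • f' xk) xk1)
    (hls : αk * ‖f' xk1 - f' xk‖ ≤ δ * ‖xk1 - xk‖) :
    (f xk1 + g xk1) - (f xk + g xk)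
      ≤ ((-((1 - δ) / αk * ‖xk1 - xk‖ ^ 2) : ℝ) : EReal) := by
  obtain ⟨-, hgbot, -, hgconv⟩ := hg
  obtain ⟨-, hfbot, -, hfconv⟩ := hf
  obtain ⟨U, -, hsU, hU⟩ := hdiff
  set z : H := xk - αk • f' xk with hz
  set N : ℝ := ‖xk1 - xk‖ ^ 2 with hNdef
  have hN : 0 ≤ N := by positivity
  set I : ℝ := ⟪xk1 - z, xk - xk1⟫ with hIdef
  set W : ℝ := ⟪f' xk, xk1 - xk⟫ with hWdef
  have hgx_top : g xk ≠ ⊤ := hxk.ne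
  have hgx_bot : g xk ≠ ⊥ := (hgbot xk).ne'
  -- xk1 is in the domain of g
  have hgp_top : g xk1 ≠ ⊤ := by
    intro h
    have hprox := hxk1 xk
    rw [h, EReal.top_add_of_ne_bot (EReal.coe_ne_bot _), top_le_iff] at hprox
    exact (EReal.add_lt_top hgx_top (EReal.coe_ne_top _)).ne hprox
  have hgp_bot : g xk1 ≠ ⊥ := (hgbot xk1).ne'
  have hp_edom : xk1 ∈ edom g := hgp_top.lt_top
  have hfx_top : f xk ≠ ⊤ := (hdom hxk).ne
  have hfx_bot : f xk ≠ ⊥ := (hfbot xk).ne'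
  have hfp_top : f xk1 ≠ ⊤ := (hdom hp_edom).ne
  have hfp_bot : f xk1 ≠ ⊥ := (hfbot xk1).ne'
  set gp : ℝ := (g xk1).toReal with hgp
  set gx : ℝ := (g xk).toReal with hgx
  set fp : ℝ := (f xk1).toReal with hfp
  set fx : ℝ := (f xk).toReal with hfx
  -- Step 1: prox inequality with strong-convexity term, for every t ∈ (0,1]
  have hstep1 : ∀ t ∈ Set.Ioc (0 : ℝ) 1,
      (2 * αk) * gp ≤ (2 * αk) * gx + 2 * I + t * N := by
    intro t ht
    have hy := combo_bound hgconv hgbot hgp_top hgx_top ht.1.le ht.2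
    have hpx := hxk1 ((1 - t) • xk1 + t • xk)
    have hL : g xk1 + ((1 / (2 * αk) * ‖xk1 - z‖ ^ 2 : ℝ) : EReal) ≠ ⊥ := by
      rw [Ne, EReal.add_eq_bot_iff]
      rintro (h | h)
      · exact hgp_bot h
      · exact EReal.coe_ne_bot _ h
    have hR : g ((1 - t) • xk1 + t • xk)
        + ((1 / (2 * αk) * ‖(1 - t) • xk1 + t • xk - z‖ ^ 2 : ℝ) : EReal) ≠ ⊤ :=
      (EReal.add_lt_top hy.1 (EReal.coe_ne_top _)).ne
    have hreal := EReal.toReal_le_toReal hpx hL hR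
    rw [EReal.toReal_add hgp_top hgp_bot (EReal.coe_ne_top _) (EReal.coe_ne_bot _),
      EReal.toReal_add hy.1 (hgbot _).ne' (EReal.coe_ne_top _) (EReal.coe_ne_bot _),
      EReal.toReal_coe, EReal.toReal_coe] at hreal
    have hyz : (1 - t) • xk1 + t • xk - z = (xk1 - z) + t • (xk - xk1) := by
      module
    have hnorm : ‖(1 - t) • xk1 + t • xk - z‖ ^ 2
        = ‖xk1 - z‖ ^ 2 + 2 * t * I + t ^ 2 * N := by
      rw [hyz, norm_add_sq_real, real_inner_smul_right, norm_smul, hIdef, hNdef,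
        Real.norm_eq_abs, norm_sub_rev xk xk1, mul_pow, sq_abs]
      ring
    rw [hnorm] at hreal
    have h3 : gp + 1 / (2 * αk) * ‖xk1 - z‖ ^ 2
        ≤ ((1 - t) * gp + t * gx)
          + 1 / (2 * αk) * (‖xk1 - z‖ ^ 2 + 2 * t * I + t ^ 2 * N) :=
      hreal.trans (add_le_add_left hy.2 _)
    have h4 := mul_le_mul_of_nonneg_left h3 (by positivity : (0:ℝ) ≤ 2 * αk)
    have e1 : (2 * αk) * (gp + 1 / (2 * αk) * ‖xk1 - z‖ ^ 2)
        = 2 * αk * gp + ‖xk1 - z‖ ^ 2 := by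
      field_simp
    have e2 : (2 * αk) * (((1 - t) * gp + t * gx)
          + 1 / (2 * αk) * (‖xk1 - z‖ ^ 2 + 2 * t * I + t ^ 2 * N))
        = 2 * αk * ((1 - t) * gp + t * gx) + (‖xk1 - z‖ ^ 2 + 2 * t * I + t ^ 2 * N) := by
      field_simp
    rw [e1, e2] at h4
    have h5 : t * ((2 * αk) * gp) ≤ t * ((2 * αk) * gx + 2 * I + t * N) := by nlinarith [h4]
    exact le_of_mul_le_mul_left h5 ht.1
  -- let t → 0⁺
  have hA : (2 * αk) * gp ≤ (2 * αk) * gx + 2 * I := by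
    have hT : Filter.Tendsto (fun t : ℝ => (2 * αk) * gx + 2 * I + t * N)
        (nhdsWithin 0 (Set.Ioi 0)) (nhds ((2 * αk) * gx + 2 * I + 0 * N)) :=
      ((continuous_const.add (continuous_id.mul continuous_const)).tendsto 0).mono_left
        nhdsWithin_le_nhds
    have := ge_of_tendsto hT (Filter.eventually_of_mem
      (Ioc_mem_nhdsGT_of_mem ⟨le_rfl, zero_lt_one⟩) hstep1)
    linarith
  -- compute I
  have hI : I = -N - αk * W := by
    have h1 : xk1 - z = (xk1 - xk) + αk • f' xk := by rw [hz]; abel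
    have h2 : xk - xk1 = -(xk1 - xk) := by abel
    rw [hIdef, h1, h2, inner_add_left, inner_neg_right, inner_neg_right,
      real_inner_smul_left, real_inner_self_eq_norm_sq, hNdef, hWdef]
    ring
  -- Step 2: gradient inequality for f
  have hGrad : HasGradientAt (fun y => (f y).toReal) (f' xk1) xk1 :=
    (hU xk1 (hsU hp_edom)).2
  have hB := grad_ineq hfbot hfconv hfp_top hfx_top hGrad
  -- bound the inner product difference using the linesearch inequality
  have hB2 : αk * ⟪f' xk1, xk - xk1⟫ ≥ -(αk * W) - δ * N := by
    have hexp : ⟪f' xk1, xk - xk1⟫ = -W - ⟪f' xk1 - f' xk, xk1 - xk⟫ := by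
      rw [hWdef]
      have h2 : xk - xk1 = -(xk1 - xk) := by abel
      rw [h2, inner_neg_right, inner_sub_left]
      ring
    have hcs := real_inner_le_norm (f' xk1 - f' xk) (xk1 - xk)
    have hd : αk * ⟪f' xk1 - f' xk, xk1 - xk⟫ ≤ δ * N := by
      calc αk * ⟪f' xk1 - f' xk, xk1 - xk⟫
          ≤ αk * (‖f' xk1 - f' xk‖ * ‖xk1 - xk‖) :=
            mul_le_mul_of_nonneg_left hcs hαk.le
        _ = (αk * ‖f' xk1 - f' xk‖) * ‖xk1 - xk‖ := by ring
        _ ≤ (δ * ‖xk1 - xk‖) * ‖xk1 - xk‖ :=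
            mul_le_mul_of_nonneg_right hls (norm_nonneg _)
        _ = δ * N := by rw [hNdef]; ring
    nlinarith [hexp, hd]
  -- combine everything
  have hBα : αk * fp + (-(αk * W) - δ * N) ≤ αk * fx := by
    have := mul_le_mul_of_nonneg_left hB hαk.le
    nlinarith [hB2, this]
  have hcomb : 2 * αk * (fp + gp) ≤ 2 * αk * (fx + gx) - 2 * (1 - δ) * N := by
    nlinarith [hA, hBα, hI]
  -- back to EReal
  have e1 : f xk1 + g xk1 = ((fp + gp : ℝ) : EReal) := by
    rw [EReal.coe_add, hfp, hgp, EReal.coe_toReal hfp_top hfp_bot,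
      EReal.coe_toReal hgp_top hgp_bot]
  have e2 : f xk + g xk = ((fx + gx : ℝ) : EReal) := by
    rw [EReal.coe_add, hfx, hgx, EReal.coe_toReal hfx_top hfx_bot,
      EReal.coe_toReal hgx_top hgx_bot]
  rw [e1, e2, ← EReal.coe_sub, EReal.coe_le_coe_iff]
  have hrw : -((1 - δ) / αk * N) = (-((1 - δ) * N)) / αk := by ring
  rw [hrw, le_div_iff₀ hαk]
  nlinarith [hcomb]
end
end

section
/- Let H be a real Hilbert space, f, g : H → ℝ ∪ {+∞} proper, lower semicontinuous, convex with dom g ⊆ dom f, f Fréchet differentiable on an open set containing dom g, and suppose ∇f is globally Lipschitz continuous on dom g with constant L > 0. Let σ > 0, θ ∈ (0,1), δ ∈ (0,1/2), and for x^k ∈ dom g let α_k be the largest α ∈ {σθⁿ : n ≥ 0} satisfying α‖∇f(J(x^k,α)) − ∇f(x^k)‖ ≤ δ‖J(x^k,α) − x^k‖ (Linesearch 1). Then α_k ≥ min{σ, δθ/L}. -/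
open Set Filter Topology Bornology RealInnerProductSpace

noncomputable section

variable {H : Type*} [NormedAddCommGroup H] [InnerProductSpace ℝ H] [CompleteSpace H]

/-- Proposition 4.2(i): if `∇f` is globally Lipschitz on `dom g` with
constant `L > 0`, then the stepsize produced by Linesearch 1 satisfies
`α ≥ min{σ, δθ/L}`. -/
theorem stmt10
    (f g : H → EReal) (f' : H → H) (prox : ℝ → H → H)
    (hf : ProperLscConvex f) (hg : ProperLscConvex g)
    (hdom : edom g ⊆ edom f)
    (hdiff : GradOnOpenSupset f f' (edom g))
    (hprox : ∀ α : ℝ, 0 < α → ∀ z : H, IsProxPt g α z (prox α z))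
    (J : H → ℝ → H) (hJ : ∀ (x : H) (α : ℝ), J x α = prox α (x - α • f' x))
    (L : ℝ) (hL : 0 < L)
    (hLip : ∀ x ∈ edom g, ∀ y ∈ edom g, ‖f' x - f' y‖ ≤ L * ‖x - y‖)
    (σ θ δ : ℝ) (hσ : 0 < σ) (hθ : θ ∈ Set.Ioo (0 : ℝ) 1)
    (hδ : δ ∈ Set.Ioo (0 : ℝ) (1 / 2))
    (xk : H) (hxk : xk ∈ edom g) (αk : ℝ)
    (hls : LS1Step f' J δ σ θ xk αk) :
    min σ (δ * θ / L) ≤ αk := by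
  obtain ⟨n, hαk, hacc, hrej⟩ := hls
  -- prox points lie in dom g
  have hproxdom : ∀ α : ℝ, 0 < α → ∀ z : H, prox α z ∈ edom g := by
    intro α hα z
    obtain ⟨y, hy⟩ := hg.1
    have h := hprox α hα z y
    have hyb := hg.2.1 y
    by_contra htop
    have : g (prox α z) = ⊤ := by
      simpa [edom, lt_top_iff_ne_top, not_not] using htop
    rw [this] at h
    have hlhs : (⊤ : EReal) + (((1 / (2 * α)) * ‖prox α z - z‖ ^ 2 : ℝ) : EReal) = ⊤ := by
      exact EReal.top_add_of_ne_bot (EReal.coe_ne_bot _)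
    rw [hlhs, top_le_iff] at h
    have : g y + (((1 / (2 * α)) * ‖y - z‖ ^ 2 : ℝ) : EReal) < ⊤ :=
      EReal.add_lt_top hy.ne (EReal.coe_ne_top _)
    exact this.ne h
  rcases n with _ | m
  · simp only [pow_zero, mul_one] at hαk
    rw [hαk]; exact min_le_left _ _
  · -- rejection at step m
    have hθ0 := hθ.1
    have hα' : (0 : ℝ) < σ * θ ^ m := by positivity
    have hfail := hrej m (Nat.lt_succ_self m)
    set α' := σ * θ ^ m with hα'def
    set p := J xk α' with hp
    have hpdom : p ∈ edom g := by
      rw [hp, hJ]; exact hproxdom _ hα' _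
    have hlip' : ‖f' p - f' xk‖ ≤ L * ‖p - xk‖ := hLip p hpdom xk hxk
    have hne : δ * ‖p - xk‖ < α' * ‖f' p - f' xk‖ := by
      simpa [LS1, not_le] using hfail
    have hpn : 0 < ‖p - xk‖ := by
      by_contra h
      push_neg at h
      have : ‖p - xk‖ = 0 := le_antisymm h (norm_nonneg _)
      rw [this] at hne hlip'
      have : α' * ‖f' p - f' xk‖ ≤ 0 := by nlinarith [hα']
      nlinarith
    have hδα : δ < α' * L := by
      have : δ * ‖p - xk‖ < α' * (L * ‖p - xk‖) :=
        lt_of_lt_of_le hne (by nlinarith)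
      nlinarith
    have : δ * θ / L < αk := by
      rw [hαk, pow_succ]
      rw [div_lt_iff₀ hL]
      calc δ * θ < (α' * L) * θ := by nlinarith
        _ = σ * (θ ^ m * θ) * L := by ring
    exact le_trans (min_le_right _ _) this.le
end
end
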